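/- For any pair of finite simple graphs X and Y and any integer k ≥ 1, γ(X □ Y □ P_{3k}) ≥ (3/4)·γ(P_{3k})·γ(X)·γ(Y). -/

import Mathlib

open SimpleGraph

/-- `S` is a dominating set of `G`: every vertex is in `S` or adjacent to a member of `S`. -/
def IsDomSet {V : Type*} (G : SimpleGraph V) (S : Set V) : Prop :=
  ∀ v, v ∈ S ∨ ∃ u ∈ S, G.Adj u v

/-- The domination number of a finite graph. -/
noncomputable def domNum {V : Type*} [Fintype V] (G : SimpleGraph V) : ℕ :=
  sInf {n | ∃ S : Finset V, S.card = n ∧ IsDomSet G ↑S}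

lemma domNum_le {V : Type*} [Fintype V] (G : SimpleGraph V) (S : Finset V)
    (h : IsDomSet G ↑S) : domNum G ≤ S.card :=
  Nat.sInf_le ⟨S, rfl, h⟩

lemma exists_min_domset {V : Type*} [Fintype V] (G : SimpleGraph V) :
    ∃ S : Finset V, S.card = domNum G ∧ IsDomSet G ↑S := by
  have hne : {n | ∃ S : Finset V, S.card = n ∧ IsDomSet G ↑S}.Nonempty :=
    ⟨Finset.univ.card, Finset.univ, rfl, fun v => Or.inl (by simp)⟩
  exact Nat.sInf_mem hne

lemma domNum_path_le (k : ℕ) : domNum (pathGraph (3 * k)) ≤ k := by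
  classical
  let f : Fin k → Fin (3 * k) := fun t => ⟨3 * t.val + 1, by omega⟩
  set S : Finset (Fin (3 * k)) := Finset.univ.image f with hS
  have hdom : IsDomSet (pathGraph (3 * k)) ↑S := by
    intro v
    have hv3 : v.val < 3 * k := v.isLt
    have ht : v.val / 3 < k := by omega
    set u : Fin (3 * k) := f ⟨v.val / 3, ht⟩ with hu
    have huS : u ∈ S := Finset.mem_image.2 ⟨_, Finset.mem_univ _, rfl⟩
    have huval : u.val = 3 * (v.val / 3) + 1 := rfl
    have hr : v.val % 3 = 0 ∨ v.val % 3 = 1 ∨ v.val % 3 = 2 := by omega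
    have hvd : v.val = 3 * (v.val / 3) + v.val % 3 := by omega
    rcases hr with h | h | h
    · exact Or.inr ⟨u, huS, pathGraph_adj.2 (Or.inr (by omega))⟩
    · have : v = u := Fin.ext (by omega)
      exact Or.inl (by simpa [this] using huS)
    · exact Or.inr ⟨u, huS, pathGraph_adj.2 (Or.inl (by omega))⟩
  calc domNum (pathGraph (3 * k)) ≤ S.card := domNum_le _ _ hdom
    _ ≤ k := by simpa [hS] using Finset.card_image_le (s := (Finset.univ : Finset (Fin k))) (f := f)

lemma path_nbhd_card_le (n : ℕ) (p : Fin n)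
    [DecidablePred fun ℓ : Fin n => p = ℓ ∨ (pathGraph n).Adj p ℓ] :
    (Finset.univ.filter (fun ℓ : Fin n => p = ℓ ∨ (pathGraph n).Adj p ℓ)).card ≤ 3 := by
  classical
  have h1 : (Finset.univ.filter (fun ℓ : Fin n => p = ℓ ∨ (pathGraph n).Adj p ℓ)).card
      ≤ ({p.val, p.val + 1, p.val - 1} : Finset ℕ).card := by
    apply Finset.card_le_card_of_injOn Fin.val
    · intro ℓ hℓ
      have hℓ' := (Finset.mem_filter.1 hℓ).2
      rcases hℓ' with h | h
      · simp [← h]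
      · rcases pathGraph_adj.1 h with h | h
        · simp only [Finset.mem_coe, Finset.mem_insert, Finset.mem_singleton]; omega
        · simp only [Finset.mem_coe, Finset.mem_insert, Finset.mem_singleton]; omega
    · intro x _ y _ hxy
      exact Fin.ext hxy
  have h2 : ({p.val, p.val + 1, p.val - 1} : Finset ℕ).card ≤ 3 := by
    apply le_trans (Finset.card_insert_le _ _)
    apply Nat.succ_le_succ
    apply le_trans (Finset.card_insert_le _ _)
    simp
  omega

/-- Auxiliary predicate: every vertex of the `X`-cell of `u` in the layer `(y, ℓ)` has a
dominator lying in that same `X`-layer. -/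
def XDom {VX VY : Type*} {n : ℕ} (X : SimpleGraph VX) (D : Finset ((VX × VY) × Fin n))
    (c : VX → VX) (u : VX) (y : VY) (ℓ : Fin n) : Prop :=
  ∀ x, c x = u → ∃ d ∈ D, d.1.2 = y ∧ d.2 = ℓ ∧ (d.1.1 = x ∨ X.Adj d.1.1 x)

lemma main_count {VX VY : Type*} [Fintype VX] [Fintype VY]
    (X : SimpleGraph VX) (Y : SimpleGraph VY) (n : ℕ)
    (D : Finset ((VX × VY) × Fin n))
    (hD : IsDomSet (boxProd (boxProd X Y) (pathGraph n)) ↑D) :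
    n * domNum X * domNum Y ≤ 4 * D.card := by
  classical
  obtain ⟨SX, hSXcard, hSXdom⟩ := exists_min_domset X
  have hc : ∀ x : VX, ∃ u, u ∈ SX ∧ (u = x ∨ X.Adj u x) := by
    intro x
    rcases hSXdom x with h | ⟨u, hu, hadj⟩
    · exact ⟨x, by simpa using h, Or.inl rfl⟩
    · exact ⟨u, by simpa using hu, Or.inr hadj⟩
  choose c hcS hcN using hc
  -- Lemma A : per X-cell and path layer, a Y-dominating configuration
  have lemA : ∀ u ∈ SX, ∀ ℓ : Fin n,
      domNum Y ≤ (Finset.univ.filter (fun y => XDom X D c u y ℓ)).card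
          + (D.filter (fun d => c d.1.1 = u ∧ (d.2 = ℓ ∨ (pathGraph n).Adj d.2 ℓ))).card := by
    intro u hu ℓ
    set E := D.filter (fun d => c d.1.1 = u ∧ (d.2 = ℓ ∨ (pathGraph n).Adj d.2 ℓ)) with hE
    set B := (Finset.univ.filter (fun y => XDom X D c u y ℓ)) ∪ E.image (fun d => d.1.2) with hB
    have hBdom : IsDomSet Y ↑B := by
      intro y
      by_cases hyd : XDom X D c u y ℓ
      · exact Or.inl (by simp [hB, hyd])
      · unfold XDom at hyd
        push_neg at hyd
        obtain ⟨x, hcx, hnd⟩ := hyd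
        rcases hD ((x, y), ℓ) with hmem | ⟨d, hdD, hadj⟩
        · exact absurd rfl (hnd ((x, y), ℓ) (Finset.mem_coe.1 hmem) rfl rfl).1
        · have hdD' : d ∈ D := Finset.mem_coe.1 hdD
          rw [boxProd_adj] at hadj
          rcases hadj with ⟨hadj1, hℓ⟩ | ⟨hP, hxy⟩
          · rw [boxProd_adj] at hadj1
            rcases hadj1 with ⟨hXadj, hy⟩ | ⟨hYadj, hx⟩
            · exact absurd hXadj (hnd d hdD' hy hℓ).2
            · have hdE : d ∈ E := Finset.mem_filter.2 ⟨hdD', by rw [hx]; exact hcx, Or.inl hℓ⟩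
              refine Or.inr ⟨d.1.2, ?_, hYadj⟩
              simp only [hB, Finset.coe_union, Set.mem_union, Finset.mem_coe]
              exact Or.inr (Finset.mem_image.2 ⟨d, hdE, rfl⟩)
          · have hdE : d ∈ E := Finset.mem_filter.2 ⟨hdD', by rw [hxy]; exact hcx, Or.inr hP⟩
            have hyB : y ∈ B := by
              apply Finset.mem_union_right
              exact Finset.mem_image.2 ⟨d, hdE, by rw [hxy]⟩
            exact Or.inl (Finset.mem_coe.2 hyB)
    calc domNum Y ≤ B.card := domNum_le Y B hBdom
      _ ≤ (Finset.univ.filter (fun y => XDom X D c u y ℓ)).card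
            + (E.image (fun d => d.1.2)).card := Finset.card_union_le _ _
      _ ≤ _ := Nat.add_le_add_left Finset.card_image_le _
  -- Lemma B : per (y, ℓ) layer, # of X-dominated cells ≤ # of D in that X-layer
  have lemB : ∀ (y : VY) (ℓ : Fin n),
      (SX.filter (fun u => XDom X D c u y ℓ)).card
        ≤ (D.filter (fun d => d.1.2 = y ∧ d.2 = ℓ)).card := by
    intro y ℓ
    set Dl := D.filter (fun d => d.1.2 = y ∧ d.2 = ℓ) with hDl
    set I := Dl.image (fun d => d.1.1) with hI
    set T := SX.filter (fun u => ¬ XDom X D c u y ℓ) with hT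
    have hdom : IsDomSet X ↑(I ∪ T) := by
      intro x
      by_cases h : XDom X D c (c x) y ℓ
      · obtain ⟨d, hdD, hdy, hdl, hdx⟩ := h x rfl
        have hdI : d.1.1 ∈ I := Finset.mem_image.2 ⟨d, Finset.mem_filter.2 ⟨hdD, hdy, hdl⟩, rfl⟩
        rcases hdx with heq | hadj
        · refine Or.inl ?_
          rw [← heq]
          simp only [Finset.coe_union, Set.mem_union, Finset.mem_coe]
          exact Or.inl hdI
        · refine Or.inr ⟨d.1.1, ?_, hadj⟩
          simp only [Finset.coe_union, Set.mem_union, Finset.mem_coe]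
          exact Or.inl hdI
      · have hTm : c x ∈ T := Finset.mem_filter.2 ⟨hcS x, h⟩
        rcases hcN x with heq | hadj
        · refine Or.inl ?_
          rw [← heq]
          simp only [Finset.coe_union, Set.mem_union, Finset.mem_coe]
          exact Or.inr hTm
        · refine Or.inr ⟨c x, ?_, hadj⟩
          simp only [Finset.coe_union, Set.mem_union, Finset.mem_coe]
          exact Or.inr hTm
    have h1 : domNum X ≤ I.card + T.card :=
      le_trans (domNum_le X _ hdom) (Finset.card_union_le _ _)
    have h2 : (SX.filter (fun u => XDom X D c u y ℓ)).card + T.card = SX.card :=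
      Finset.card_filter_add_card_filter_not _
    have h3 : I.card ≤ Dl.card := Finset.card_image_le
    omega
  -- Summation of lemma A over all cells and layers
  have sumA : SX.card * (n * domNum Y)
      ≤ (∑ u ∈ SX, ∑ ℓ : Fin n, (Finset.univ.filter (fun y => XDom X D c u y ℓ)).card)
        + ∑ u ∈ SX, ∑ ℓ : Fin n,
            (D.filter (fun d => c d.1.1 = u ∧ (d.2 = ℓ ∨ (pathGraph n).Adj d.2 ℓ))).card := by
    rw [← Finset.sum_add_distrib]
    calc SX.card * (n * domNum Y) = ∑ _u ∈ SX, (n * domNum Y) := by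
          rw [Finset.sum_const, smul_eq_mul]
      _ = ∑ _u ∈ SX, ∑ _ℓ : Fin n, domNum Y := by
          simp [Finset.sum_const, Finset.card_univ]
      _ ≤ _ := by
          apply Finset.sum_le_sum
          intro u hu
          rw [← Finset.sum_add_distrib]
          exact Finset.sum_le_sum fun ℓ _ => lemA u hu ℓ
  -- First double sum is at most |D|
  have hS1 : (∑ u ∈ SX, ∑ ℓ : Fin n, (Finset.univ.filter (fun y => XDom X D c u y ℓ)).card)
      ≤ D.card := by
    have e1 : (∑ u ∈ SX, ∑ ℓ : Fin n, (Finset.univ.filter (fun y => XDom X D c u y ℓ)).card)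
        = ∑ y : VY, ∑ ℓ : Fin n, (SX.filter (fun u => XDom X D c u y ℓ)).card := by
      simp only [Finset.card_filter]
      calc (∑ u ∈ SX, ∑ ℓ : Fin n, ∑ y : VY, if XDom X D c u y ℓ then 1 else 0)
          = ∑ ℓ : Fin n, ∑ u ∈ SX, ∑ y : VY, if XDom X D c u y ℓ then 1 else 0 :=
            Finset.sum_comm
        _ = ∑ ℓ : Fin n, ∑ y : VY, ∑ u ∈ SX, if XDom X D c u y ℓ then 1 else 0 :=
            Finset.sum_congr rfl fun ℓ _ => Finset.sum_comm
        _ = ∑ y : VY, ∑ ℓ : Fin n, ∑ u ∈ SX, if XDom X D c u y ℓ then 1 else 0 :=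
            Finset.sum_comm
    rw [e1]
    calc ∑ y : VY, ∑ ℓ : Fin n, (SX.filter (fun u => XDom X D c u y ℓ)).card
        ≤ ∑ y : VY, ∑ ℓ : Fin n, (D.filter (fun d => d.1.2 = y ∧ d.2 = ℓ)).card :=
          Finset.sum_le_sum fun y _ => Finset.sum_le_sum fun ℓ _ => lemB y ℓ
      _ = D.card := by
          simp only [Finset.card_filter]
          calc (∑ y : VY, ∑ ℓ : Fin n, ∑ d ∈ D, if d.1.2 = y ∧ d.2 = ℓ then 1 else 0)
              = ∑ y : VY, ∑ d ∈ D, ∑ ℓ : Fin n, if d.1.2 = y ∧ d.2 = ℓ then 1 else 0 :=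
                Finset.sum_congr rfl fun y _ => Finset.sum_comm
            _ = ∑ d ∈ D, ∑ y : VY, ∑ ℓ : Fin n, if d.1.2 = y ∧ d.2 = ℓ then 1 else 0 :=
                Finset.sum_comm
            _ = ∑ d ∈ D, 1 := by
                refine Finset.sum_congr rfl fun d _ => ?_
                have h1 : ∀ y : VY, (∑ ℓ : Fin n, if d.1.2 = y ∧ d.2 = ℓ then 1 else 0)
                    = if d.1.2 = y then 1 else 0 := by
                  intro y
                  by_cases h : d.1.2 = y
                  · simp [h, Finset.sum_ite_eq]
                  · simp [h]
                rw [Finset.sum_congr rfl fun y _ => h1 y, Finset.sum_ite_eq]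
                simp
            _ = D.card := by simp
  -- Second double sum is at most 3|D|
  have hS2 : (∑ u ∈ SX, ∑ ℓ : Fin n,
      (D.filter (fun d => c d.1.1 = u ∧ (d.2 = ℓ ∨ (pathGraph n).Adj d.2 ℓ))).card)
      ≤ 3 * D.card := by
    have e2 : (∑ u ∈ SX, ∑ ℓ : Fin n,
        (D.filter (fun d => c d.1.1 = u ∧ (d.2 = ℓ ∨ (pathGraph n).Adj d.2 ℓ))).card)
        = ∑ d ∈ D, ∑ u ∈ SX, ∑ ℓ : Fin n,
            if c d.1.1 = u ∧ (d.2 = ℓ ∨ (pathGraph n).Adj d.2 ℓ) then 1 else 0 := by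
      simp only [Finset.card_filter]
      calc (∑ u ∈ SX, ∑ ℓ : Fin n, ∑ d ∈ D,
              if c d.1.1 = u ∧ (d.2 = ℓ ∨ (pathGraph n).Adj d.2 ℓ) then 1 else 0)
          = ∑ u ∈ SX, ∑ d ∈ D, ∑ ℓ : Fin n,
              if c d.1.1 = u ∧ (d.2 = ℓ ∨ (pathGraph n).Adj d.2 ℓ) then 1 else 0 :=
            Finset.sum_congr rfl fun u _ => Finset.sum_comm
        _ = ∑ d ∈ D, ∑ u ∈ SX, ∑ ℓ : Fin n,
              if c d.1.1 = u ∧ (d.2 = ℓ ∨ (pathGraph n).Adj d.2 ℓ) then 1 else 0 :=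
            Finset.sum_comm
    rw [e2]
    calc (∑ d ∈ D, ∑ u ∈ SX, ∑ ℓ : Fin n,
            if c d.1.1 = u ∧ (d.2 = ℓ ∨ (pathGraph n).Adj d.2 ℓ) then 1 else 0)
        ≤ ∑ _d ∈ D, 3 := by
          refine Finset.sum_le_sum fun d _ => ?_
          have estep : ∀ u : VX, (∑ ℓ : Fin n,
              if c d.1.1 = u ∧ (d.2 = ℓ ∨ (pathGraph n).Adj d.2 ℓ) then 1 else 0)
              = if c d.1.1 = u then
                  (Finset.univ.filter (fun ℓ : Fin n => d.2 = ℓ ∨ (pathGraph n).Adj d.2 ℓ)).card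
                else 0 := by
            intro u
            by_cases h : c d.1.1 = u
            · rw [if_pos h, Finset.card_filter]
              refine Finset.sum_congr rfl fun ℓ _ => ?_
              simp [h]
            · simp [h]
          rw [Finset.sum_congr rfl fun u _ => estep u]
          rw [Finset.sum_ite_eq SX (c d.1.1)]
          simp only [hcS d.1.1, if_true]
          exact path_nbhd_card_le n d.2
      _ = 3 * D.card := by
          rw [Finset.sum_const, smul_eq_mul, mul_comm]
  -- Conclusion
  have htot : SX.card * (n * domNum Y) ≤ 4 * D.card := by
    have := le_trans sumA (Nat.add_le_add hS1 hS2)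
    omega
  calc n * domNum X * domNum Y = SX.card * (n * domNum Y) := by rw [hSXcard]; ring
    _ ≤ 4 * D.card := htot

/-- γ(X □ Y □ P_{3k}) ≥ (3/4)·γ(P_{3k})·γ(X)·γ(Y) for k ≥ 1. -/
theorem stmt_3 {VX VY : Type*} [Fintype VX] [Fintype VY]
    (X : SimpleGraph VX) (Y : SimpleGraph VY) (k : ℕ) (hk : 1 ≤ k) :
    (domNum (boxProd (boxProd X Y) (pathGraph (3 * k))) : ℚ) ≥
      (3 / 4 : ℚ) * domNum (pathGraph (3 * k)) * domNum X * domNum Y := by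
  obtain ⟨D, hDcard, hDdom⟩ := exists_min_domset (boxProd (boxProd X Y) (pathGraph (3 * k)))
  have h1 : 3 * k * domNum X * domNum Y ≤ 4 * domNum (boxProd (boxProd X Y) (pathGraph (3 * k))) := by
    rw [← hDcard]
    calc 3 * k * domNum X * domNum Y = 3 * k * domNum X * domNum Y := rfl
      _ ≤ 4 * D.card := main_count X Y (3 * k) D hDdom
  have h2 : domNum (pathGraph (3 * k)) ≤ k := domNum_path_le k
  have hq1 : (3 * (k : ℚ) * domNum X * domNum Y) ≤ 4 * domNum (boxProd (boxProd X Y) (pathGraph (3 * k))) := by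
    exact_mod_cast h1
  have hq2 : (domNum (pathGraph (3 * k)) : ℚ) ≤ (k : ℚ) := by exact_mod_cast h2
  have hX0 : (0 : ℚ) ≤ domNum X := Nat.cast_nonneg _
  have hY0 : (0 : ℚ) ≤ domNum Y := Nat.cast_nonneg _
  rw [ge_iff_le]
  nlinarith [mul_nonneg hX0 hY0, hq1, hq2]
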